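/- Let 𝔤_λ be an oscillator Lie algebra and let r₀ ∈ ⋀²S. Then the Schouten bracket of r₀ with itself satisfies [r₀, r₀] = 2 e₀ ∧ ω_{r₀,r₀}; explicitly, for all α, β, γ ∈ 𝔤_λ*, [r₀,r₀](α,β,γ) = 2( α(e₀) ω(r₀_#(β), r₀_#(γ)) + β(e₀) ω(r₀_#(γ), r₀_#(α)) + γ(e₀) ω(r₀_#(α), r₀_#(β)) ). -/

import Mathlib

open Module LinearMap

noncomputable section

/-- Index type for the basis of an oscillator Lie algebra:
`Sum.inl 0 ↦ e₋₁`, `Sum.inl 1 ↦ e₀`, `Sum.inr (Sum.inl i) ↦ eᵢ`,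
`Sum.inr (Sum.inr i) ↦ ěᵢ`. -/
abbrev OscIdx (n : ℕ) := Fin 2 ⊕ (Fin n ⊕ Fin n)

/-- The oscillator Lie algebra `𝔤_λ`: a real Lie algebra `L` together with a basis
`{e₋₁, e₀, e₁, …, eₙ, ě₁, …, ěₙ}` whose nonzero brackets on basis vectors are
`[e₋₁, eⱼ] = λⱼ ěⱼ`, `[e₋₁, ěⱼ] = −λⱼ eⱼ`, `[eⱼ, ěⱼ] = e₀` (all other brackets of the
basis vectors vanish or follow by antisymmetry; in particular `e₀` is central). -/
structure OscAlg (n : ℕ) (lam : Fin n → ℝ) (L : Type) [LieRing L] [LieAlgebra ℝ L] where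
  basis : Basis (OscIdx n) ℝ L
  bracket_em_e : ∀ j, ⁅basis (Sum.inl 0), basis (Sum.inr (Sum.inl j))⁆
      = lam j • basis (Sum.inr (Sum.inr j))
  bracket_em_f : ∀ j, ⁅basis (Sum.inl 0), basis (Sum.inr (Sum.inr j))⁆
      = -lam j • basis (Sum.inr (Sum.inl j))
  bracket_e_f : ∀ i j, ⁅basis (Sum.inr (Sum.inl i)), basis (Sum.inr (Sum.inr j))⁆
      = if i = j then basis (Sum.inl 1) else 0
  bracket_e_e : ∀ i j, ⁅basis (Sum.inr (Sum.inl i)), basis (Sum.inr (Sum.inl j))⁆ = 0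
  bracket_f_f : ∀ i j, ⁅basis (Sum.inr (Sum.inr i)), basis (Sum.inr (Sum.inr j))⁆ = 0
  bracket_e0 : ∀ x : L, ⁅basis (Sum.inl 1), x⁆ = 0

/-- `0 < λ₁ ≤ … ≤ λₙ`: the standing assumption on the parameters of an oscillator
Lie algebra. -/
def OscParam {n : ℕ} (lam : Fin n → ℝ) : Prop := (∀ i, 0 < lam i) ∧ Monotone lam

/-- Genericity: `0 < λ₁ < … < λₙ` and `λ_k ≠ λ_i + λ_j` for all `i < j < k`. -/
def IsGeneric {n : ℕ} (lam : Fin n → ℝ) : Prop :=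
  (∀ i, 0 < lam i) ∧ StrictMono lam ∧
    ∀ i j k : Fin n, i < j → j < k → lam k ≠ lam i + lam j

namespace OscAlg

variable {n : ℕ} {lam : Fin n → ℝ} {L : Type} [LieRing L] [LieAlgebra ℝ L]

/-- `e₋₁`. -/
def em (B : OscAlg n lam L) : L := B.basis (Sum.inl 0)
/-- `e₀`. -/
def e0 (B : OscAlg n lam L) : L := B.basis (Sum.inl 1)
/-- `eᵢ`. -/
def e (B : OscAlg n lam L) (i : Fin n) : L := B.basis (Sum.inr (Sum.inl i))
/-- `ěᵢ`. -/
def f (B : OscAlg n lam L) (i : Fin n) : L := B.basis (Sum.inr (Sum.inr i))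
/-- `e₋₁*`, an element of the dual basis. -/
def em' (B : OscAlg n lam L) : Dual ℝ L := B.basis.coord (Sum.inl 0)
/-- `e₀*`. -/
def e0' (B : OscAlg n lam L) : Dual ℝ L := B.basis.coord (Sum.inl 1)
/-- `eᵢ*`. -/
def e' (B : OscAlg n lam L) (i : Fin n) : Dual ℝ L := B.basis.coord (Sum.inr (Sum.inl i))
/-- `ěᵢ*`. -/
def f' (B : OscAlg n lam L) (i : Fin n) : Dual ℝ L := B.basis.coord (Sum.inr (Sum.inr i))

/-- The subspace `S` spanned by the `eᵢ, ěᵢ`. -/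
def S (B : OscAlg n lam L) : Submodule ℝ L :=
  Submodule.span ℝ (Set.range B.e ∪ Set.range B.f)

/-- The `2`-form `ω` on `𝔤_λ`, viewed as a linear map `𝔤_λ → 𝔤_λ*`:
`ω(e₋₁,·) = ω(e₀,·) = 0`, `ω(eᵢ,eⱼ) = ω(ěᵢ,ěⱼ) = 0`, `ω(eᵢ,ěⱼ) = δᵢⱼ`. -/
def om (B : OscAlg n lam L) : L →ₗ[ℝ] Dual ℝ L :=
  ∑ i : Fin n, ((B.e' i).smulRight (B.f' i) - (B.f' i).smulRight (B.e' i))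

/-- The derivation `J_a` of `𝔤_λ` given by `J_a(e₋₁) = J_a(e₀) = 0`, `J_a(eᵢ) = aᵢ ěᵢ`,
`J_a(ěᵢ) = −aᵢ eᵢ`. -/
def Ja (B : OscAlg n lam L) (a : Fin n → ℝ) : L →ₗ[ℝ] L :=
  B.basis.constr ℝ (Sum.elim (fun _ => (0 : L))
    (Sum.elim (fun i => a i • B.f i) (fun i => -(a i) • B.e i)))

end OscAlg

section Bivectors

variable {L : Type} [LieRing L] [LieAlgebra ℝ L]

/-- `x ∧ y`, viewed as the linear map `𝔤* → 𝔤`, `α ↦ α(x) y − α(y) x`; this corresponds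
to the skew-symmetric bilinear form `(α,β) ↦ α(x)β(y) − α(y)β(x)` on `𝔤*`. -/
def wedge (x y : L) : Dual ℝ L →ₗ[ℝ] L :=
  (Module.Dual.eval ℝ L x).smulRight y - (Module.Dual.eval ℝ L y).smulRight x

/-- A bivector `r ∈ ⋀²𝔤`, identified with the linear map `r_# : 𝔤* → 𝔤` of the
corresponding skew-symmetric bilinear form on `𝔤*` (so `r(α,β) = β(r_#(α))`). -/
def IsBivector (r : Dual ℝ L →ₗ[ℝ] L) : Prop := ∀ α β : Dual ℝ L, α (r β) = - β (r α)

/-- The coadjoint action `ad*_u α := α ∘ ad_u`. -/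
def coad (u : L) : Dual ℝ L →ₗ[ℝ] Dual ℝ L := (LieAlgebra.ad ℝ L u).dualMap

/-- `J† r` for an endomorphism `J` of `𝔤`; in terms of bilinear forms,
`(J† r)(α,β) = r(α∘J, β) + r(α, β∘J)`. -/
def dag (J : L →ₗ[ℝ] L) (r : Dual ℝ L →ₗ[ℝ] L) : Dual ℝ L →ₗ[ℝ] L :=
  r ∘ₗ J.dualMap + J ∘ₗ r

/-- The adjoint action `ad_u† r` of `u ∈ 𝔤` on bivectors:
`(ad_u† r)(α,β) = r(ad*_u α, β) + r(α, ad*_u β)`. -/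
def adDag (u : L) (r : Dual ℝ L →ₗ[ℝ] L) : Dual ℝ L →ₗ[ℝ] L :=
  dag (LieAlgebra.ad ℝ L u) r

/-- The Schouten bracket `[r,r]` of a bivector with itself:
`[r,r](α,β,γ) = 2α([r_#β, r_#γ]) + 2β([r_#γ, r_#α]) + 2γ([r_#α, r_#β])`. -/
def schouten (r : Dual ℝ L →ₗ[ℝ] L) (α β γ : Dual ℝ L) : ℝ :=
  2 * α ⁅r β, r γ⁆ + 2 * β ⁅r γ, r α⁆ + 2 * γ ⁅r α, r β⁆

/-- `r` is a solution of the classical Yang–Baxter equation: `[r,r] = 0`. -/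
def IsCYBE (r : Dual ℝ L →ₗ[ℝ] L) : Prop := ∀ α β γ : Dual ℝ L, schouten r α β γ = 0

/-- `r` is a solution of the generalized classical Yang–Baxter equation:
`ad_u [r,r] = 0` for all `u`. -/
def IsGCYBE (r : Dual ℝ L →ₗ[ℝ] L) : Prop :=
  ∀ (u : L) (α β γ : Dual ℝ L),
    schouten r (coad u α) β γ + schouten r α (coad u β) γ + schouten r α β (coad u γ) = 0

/-- A derivation of the Lie algebra `L`. -/
def IsDerivation (J : L →ₗ[ℝ] L) : Prop := ∀ x y : L, J ⁅x, y⁆ = ⁅J x, y⁆ + ⁅x, J y⁆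

/-- The 1-cocycle condition for `ξ : 𝔤 → ⋀²𝔤` with respect to the adjoint action:
`ξ([u,v]) = ad_u† ξ(v) − ad_v† ξ(u)`. -/
def IsCocycle (ξ : L →ₗ[ℝ] (Dual ℝ L →ₗ[ℝ] L)) : Prop :=
  ∀ u v : L, ξ ⁅u, v⁆ = adDag u (ξ v) - adDag v (ξ u)

/-- The dual bracket `[α,β]*` associated to `ξ : 𝔤 → ⋀²𝔤`:
`[α,β]*(u) = ξ(u)(α,β)`. -/
def dualBr (ξ : L →ₗ[ℝ] (Dual ℝ L →ₗ[ℝ] L)) (α β : Dual ℝ L) : Dual ℝ L :=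
  (β : L →ₗ[ℝ] ℝ) ∘ₗ (ξ.flip α)

/-- `ξ : 𝔤 → ⋀²𝔤` is a Lie bialgebra structure: `ξ` takes values in bivectors, is a
1-cocycle, and the dual bracket satisfies the Jacobi identity. -/
def IsBialgebra (ξ : L →ₗ[ℝ] (Dual ℝ L →ₗ[ℝ] L)) : Prop :=
  (∀ (u : L) (α β : Dual ℝ L), α (ξ u β) = - β (ξ u α)) ∧ IsCocycle ξ ∧
  ∀ α β γ : Dual ℝ L,
    dualBr ξ (dualBr ξ α β) γ + dualBr ξ (dualBr ξ β γ) α + dualBr ξ (dualBr ξ γ α) β = 0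

end Bivectors

namespace OscAlg

variable {n : ℕ} {lam : Fin n → ℝ} {L : Type} [LieRing L] [LieAlgebra ℝ L]

/-- Membership in `⋀²S`: a bivector `r` with `r_#(e₋₁*) = r_#(e₀*) = 0` and
`Im r_# ⊆ S`. -/
def InW2S (B : OscAlg n lam L) (r : Dual ℝ L →ₗ[ℝ] L) : Prop :=
  IsBivector r ∧ r B.em' = 0 ∧ r B.e0' = 0 ∧ ∀ α : Dual ℝ L, r α ∈ B.S

/-- `ω_{r₁,r₂}(α,β) = (1/2)(ω(r₁_#(α), r₂_#(β)) + ω(r₂_#(α), r₁_#(β)))`. -/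
def omPair (B : OscAlg n lam L) (r₁ r₂ : Dual ℝ L →ₗ[ℝ] L) (α β : Dual ℝ L) : ℝ :=
  (1/2) * (B.om (r₁ α) (r₂ β) + B.om (r₂ α) (r₁ β))

end OscAlg

/-! On `S` the bracket of `𝔤_λ` is `⁅x, y⁆ = ω(x, y) e₀` (so `S ⊕ ℝ e₀` is a Heisenberg algebra).
Hence every bracket `⁅r₀_# β, r₀_# γ⁆` in the Schouten bracket of an `r₀` with image in `S` is
`ω(r₀_# β, r₀_# γ) e₀`. -/

section Bivectors

variable {L : Type} [LieRing L] [LieAlgebra ℝ L]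

theorem schouten_eq_of_lie_eq_smul {r : Dual ℝ L →ₗ[ℝ] L} {z : L} {c : Dual ℝ L → Dual ℝ L → ℝ}
    (h : ∀ α β, ⁅r α, r β⁆ = c α β • z) (α β γ : Dual ℝ L) :
    schouten r α β γ = 2 * (α z * c β γ + β z * c γ α + γ z * c α β) := by
  simp only [schouten, h, map_smul, smul_eq_mul]
  ring

end Bivectors

namespace OscAlg

variable {n : ℕ} {lam : Fin n → ℝ} {L : Type} [LieRing L] [LieAlgebra ℝ L] (B : OscAlg n lam L)

theorem om_apply (x y : L) :
    B.om x y = ∑ i : Fin n, (B.e' i x * B.f' i y - B.f' i x * B.e' i y) := by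
  simp [om, smul_eq_mul]

theorem om_e_e (i j : Fin n) : B.om (B.e i) (B.e j) = 0 := by
  simp [om_apply, e', f', e]

theorem om_f_f (i j : Fin n) : B.om (B.f i) (B.f j) = 0 := by
  simp [om_apply, e', f', f]

theorem om_e_f (i j : Fin n) : B.om (B.e i) (B.f j) = if i = j then 1 else 0 := by
  simp [om_apply, e', f', e, f, Finsupp.single_apply]

theorem om_f_e (i j : Fin n) : B.om (B.f i) (B.e j) = if i = j then -1 else 0 := by
  simp only [om_apply, e', f', e, f, Basis.coord_apply, Basis.repr_self, Finsupp.single_apply]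
  split_ifs with h <;> simp [h]

theorem lie_e_e (i j : Fin n) : ⁅B.e i, B.e j⁆ = 0 := B.bracket_e_e i j

theorem lie_f_f (i j : Fin n) : ⁅B.f i, B.f j⁆ = 0 := B.bracket_f_f i j

theorem lie_e_f (i j : Fin n) : ⁅B.e i, B.f j⁆ = if i = j then B.e0 else 0 :=
  B.bracket_e_f i j

theorem lie_f_e (i j : Fin n) : ⁅B.f i, B.e j⁆ = if i = j then -B.e0 else 0 := by
  rw [← lie_skew, lie_e_f]
  rcases eq_or_ne i j with rfl | h
  · simp
  · simp [h, h.symm]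

theorem lie_eq_om_smul_e0_of_mem_S {x y : L} (hx : x ∈ B.S) (hy : y ∈ B.S) :
    ⁅x, y⁆ = B.om x y • B.e0 := by
  induction hx, hy using Submodule.span_induction₂ with
  | mem_mem x y hx hy =>
    rcases hx with ⟨i, rfl⟩ | ⟨i, rfl⟩ <;> rcases hy with ⟨j, rfl⟩ | ⟨j, rfl⟩
    · rw [om_e_e, lie_e_e, zero_smul]
    · rw [om_e_f, lie_e_f]
      split_ifs <;> simp
    · rw [om_f_e, lie_f_e]
      split_ifs <;> simp
    · rw [om_f_f, lie_f_f, zero_smul]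
  | zero_left => simp
  | zero_right => simp
  | add_left _ _ _ _ _ _ h₁ h₂ => simp [add_lie, h₁, h₂, add_smul]
  | add_right _ _ _ _ _ _ h₁ h₂ => simp [lie_add, h₁, h₂, add_smul]
  | smul_left _ _ _ _ _ h => simp [smul_lie, h, mul_smul]
  | smul_right _ _ _ _ _ h => simp [lie_smul, h, mul_smul]

end OscAlg

theorem oscillator_schouten_eq_two_e0_wedge_om_general
    {n : ℕ} {lam : Fin n → ℝ}
    {L : Type} [LieRing L] [LieAlgebra ℝ L] (B : OscAlg n lam L)
    (r₀ : Dual ℝ L →ₗ[ℝ] L) (hr₀ : B.InW2S r₀) :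
    ∀ α β γ : Dual ℝ L,
      schouten r₀ α β γ
        = 2 * (α B.e0 * B.om (r₀ β) (r₀ γ) + β B.e0 * B.om (r₀ γ) (r₀ α)
            + γ B.e0 * B.om (r₀ α) (r₀ β)) :=
  schouten_eq_of_lie_eq_smul fun α β =>
    B.lie_eq_om_smul_e0_of_mem_S (hr₀.2.2.2 α) (hr₀.2.2.2 β)

/-- **Lemma.** For an oscillator Lie algebra `𝔤_λ` and `r₀ ∈ ⋀²S`, the Schouten bracket
satisfies `[r₀,r₀] = 2 e₀ ∧ ω_{r₀,r₀}`; explicitly, for all `α, β, γ ∈ 𝔤_λ*`,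
`[r₀,r₀](α,β,γ) = 2(α(e₀) ω(r₀_#β, r₀_#γ) + β(e₀) ω(r₀_#γ, r₀_#α)
+ γ(e₀) ω(r₀_#α, r₀_#β))`. -/
theorem oscillator_schouten_eq_two_e0_wedge_om
    {n : ℕ} (hn : 0 < n) {lam : Fin n → ℝ} (hlam : OscParam lam)
    {L : Type} [LieRing L] [LieAlgebra ℝ L] (B : OscAlg n lam L)
    (r₀ : Dual ℝ L →ₗ[ℝ] L) (hr₀ : B.InW2S r₀) :
    ∀ α β γ : Dual ℝ L,
      schouten r₀ α β γ
        = 2 * (α B.e0 * B.om (r₀ β) (r₀ γ) + β B.e0 * B.om (r₀ γ) (r₀ α)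
            + γ B.e0 * B.om (r₀ α) (r₀ β)) :=
  oscillator_schouten_eq_two_e0_wedge_om_general B r₀ hr₀
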